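/- Let P be a non-empty closed convex set of BCEs. The set of P-minimally mixed BCEs is open and dense in P (with the subspace topology induced from the Euclidean topology on Δ(A×Θ)). -/
import Mathlib


open Finset

variable {I : Type} [Fintype I] [DecidableEq I]
  {A : I → Type} [∀ i, Fintype (A i)] [∀ i, DecidableEq (A i)]
  {Θ : Type} [Fintype Θ]

/-- The marginal probability that player `i` plays `ai` under outcome `p`. -/
noncomputable def marg (p : ((∀ j, A j) × Θ) → ℝ) (i : I) (ai : A i) : ℝ :=
  ∑ x : (∀ j, A j) × Θ, if x.1 i = ai then p x else 0

/-- The conditional belief of player `i` given recommendation `ai`, represented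
as a function on full profile-state pairs that ignores the `i`-th coordinate
(it is overridden by `ai`).  It is the zero function if `marg p i ai = 0`. -/
noncomputable def condBelief (p : ((∀ j, A j) × Θ) → ℝ) (i : I) (ai : A i) :
    ((∀ j, A j) × Θ) → ℝ :=
  fun x => p (Function.update x.1 i ai, x.2) / marg p i ai

/-- Expected utility for player `i` of playing `ci` against belief `μ`. -/
noncomputable def dev (u : ((∀ j, A j) × Θ) → ℝ) (i : I) (ci : A i)
    (μ : ((∀ j, A j) × Θ) → ℝ) : ℝ :=
  ∑ x : (∀ j, A j) × Θ, u (Function.update x.1 i ci, x.2) * μ x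

/-- Best responses of player `i` (with utility `u`) to belief `μ`. -/
noncomputable def BRset (u : ((∀ j, A j) × Θ) → ℝ) (i : I)
    (μ : ((∀ j, A j) × Θ) → ℝ) : Set (A i) :=
  {ci | ∀ di : A i, dev u i di μ ≤ dev u i ci μ}

/-- The obedience constraint defining a Bayes correlated equilibrium. -/
def Obedient (u : ∀ i : I, ((∀ j, A j) × Θ) → ℝ) (p : ((∀ j, A j) × Θ) → ℝ) : Prop :=
  ∀ i : I, ∀ ai bi : A i,
    0 ≤ ∑ x : (∀ j, A j) × Θ,
      (if x.1 i = ai then (u i x - u i (Function.update x.1 i bi, x.2)) * p x else 0)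

/-- The separation constraint: recommendations inducing distinct beliefs have
disjoint best-response sets. -/
def Separated (u : ∀ i : I, ((∀ j, A j) × Θ) → ℝ) (p : ((∀ j, A j) × Θ) → ℝ) : Prop :=
  ∀ i : I, ∀ ai bi : A i, 0 < marg p i ai → 0 < marg p i bi →
    condBelief p i ai ≠ condBelief p i bi →
    BRset (u i) i (condBelief p i ai) ∩ BRset (u i) i (condBelief p i bi) = ∅

/-- `p` is an outcome with `Θ`-marginal `π`. -/
def IsOutcome (π : Θ → ℝ) (p : ((∀ j, A j) × Θ) → ℝ) : Prop :=
  (∀ x, 0 ≤ p x) ∧ ∀ θ, (∑ a : ∀ j, A j, p (a, θ)) = π θ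

/-- `p` is `P`-minimally mixed: it has `P`-maximal support, and any pair of
recommendations with distinct conditional beliefs under some `q ∈ P` also has
distinct conditional beliefs under `p`. -/
def MinMixed (P : Set (((∀ j, A j) × Θ) → ℝ)) (p : ((∀ j, A j) × Θ) → ℝ) : Prop :=
  (∀ q ∈ P, ∀ i : I, ∀ ai : A i, 0 < marg q i ai → 0 < marg p i ai) ∧
  (∀ q ∈ P, ∀ i : I, ∀ ai bi : A i, 0 < marg q i ai → 0 < marg q i bi →
    condBelief q i ai ≠ condBelief q i bi → condBelief p i ai ≠ condBelief p i bi)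

set_option linter.unusedSectionVars false
set_option linter.unusedVariables false

/-! ### Auxiliary machinery for the proof of `stmt7` -/


/-- The convex combination `(1 - t) q + t r`, as a plain function. -/
noncomputable def mixr (t : ℝ) (q r : ((∀ j, A j) × Θ) → ℝ) : ((∀ j, A j) × Θ) → ℝ :=
  fun x => (1 - t) * q x + t * r x

lemma mixr_zero (q r : ((∀ j, A j) × Θ) → ℝ) : mixr 0 q r = q := by
  funext x; simp [mixr]

lemma mixr_one (q r : ((∀ j, A j) × Θ) → ℝ) : mixr 1 q r = r := by
  funext x; simp [mixr]

lemma mixr_mem {P : Set (((∀ j, A j) × Θ) → ℝ)} (hPcv : Convex ℝ P)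
    {q r : ((∀ j, A j) × Θ) → ℝ} (hq : q ∈ P) (hr : r ∈ P) {t : ℝ}
    (ht : t ∈ Set.Icc (0:ℝ) 1) : mixr t q r ∈ P := by
  have h := hPcv hq hr (a := 1 - t) (b := t) (by linarith [ht.2]) ht.1 (by ring)
  exact h

lemma marg_mixr (t : ℝ) (q r : ((∀ j, A j) × Θ) → ℝ) (i : I) (ai : A i) :
    marg (mixr t q r) i ai = (1 - t) * marg q i ai + t * marg r i ai := by
  unfold marg mixr
  rw [Finset.mul_sum, Finset.mul_sum, ← Finset.sum_add_distrib]
  exact Finset.sum_congr rfl fun x _ => by split_ifs <;> ring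

lemma marg_nonneg {p : ((∀ j, A j) × Θ) → ℝ} (hp : ∀ x, 0 ≤ p x) (i : I) (ai : A i) :
    0 ≤ marg p i ai :=
  Finset.sum_nonneg fun x _ => by split_ifs; exacts [hp x, le_refl 0]

lemma margpos_or {q r : ((∀ j, A j) × Θ) → ℝ} (hq : ∀ x, 0 ≤ q x) (hr : ∀ x, 0 ≤ r x)
    {t0 : ℝ} {i : I} {ai : A i}
    (h : 0 < marg (mixr t0 q r) i ai) : 0 < marg q i ai ∨ 0 < marg r i ai := by
  by_contra hcon
  push_neg at hcon
  have h1 : marg q i ai = 0 := le_antisymm hcon.1 (marg_nonneg hq i ai)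
  have h2 : marg r i ai = 0 := le_antisymm hcon.2 (marg_nonneg hr i ai)
  rw [marg_mixr, h1, h2] at h
  simp at h

lemma marg_mixr_pos {q r : ((∀ j, A j) × Θ) → ℝ} (hq : ∀ x, 0 ≤ q x) (hr : ∀ x, 0 ≤ r x)
    {t : ℝ} (ht : t ∈ Set.Ioo (0:ℝ) 1) {i : I} {ai : A i}
    (h : 0 < marg q i ai ∨ 0 < marg r i ai) : 0 < marg (mixr t q r) i ai := by
  rw [marg_mixr]
  have h1 := marg_nonneg hq i ai
  have h2 := marg_nonneg hr i ai
  obtain ⟨ht1, ht2⟩ := ht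
  rcases h with h | h
  · nlinarith
  · nlinarith

lemma condBelief_ne_iff {p : ((∀ j, A j) × Θ) → ℝ} {i : I} {ai bi : A i}
    (hm1 : marg p i ai ≠ 0) (hm2 : marg p i bi ≠ 0) :
    condBelief p i ai ≠ condBelief p i bi ↔
      ∃ x : (∀ j, A j) × Θ,
        p (Function.update x.1 i ai, x.2) * marg p i bi ≠
          p (Function.update x.1 i bi, x.2) * marg p i ai := by
  rw [Function.ne_iff]
  refine exists_congr fun x => not_congr ?_
  exact div_eq_div_iff hm1 hm2

lemma quad_finite {a b c t0 : ℝ} (h : a + b * t0 + c * t0 ^ 2 ≠ 0) :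
    {t : ℝ | a + b * t + c * t ^ 2 = 0}.Finite := by
  have hp : (Polynomial.C a + Polynomial.C b * Polynomial.X
      + Polynomial.C c * Polynomial.X ^ 2 : Polynomial ℝ) ≠ 0 := by
    intro h0
    apply h
    have := congrArg (Polynomial.eval t0) h0
    simpa using this
  refine (Polynomial.finite_setOf_isRoot hp).subset fun t ht => ?_
  simpa [Polynomial.IsRoot] using ht

/-- `ai` and `bi` both get positive probability and induce distinct beliefs under `p`. -/
def DistinctB (p : ((∀ j, A j) × Θ) → ℝ) (i : I) (ai bi : A i) : Prop :=
  0 < marg p i ai ∧ 0 < marg p i bi ∧ condBelief p i ai ≠ condBelief p i bi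

lemma seg_finite {q r : ((∀ j, A j) × Θ) → ℝ} (hq : ∀ x, 0 ≤ q x) (hr : ∀ x, 0 ≤ r x)
    {i : I} {ai bi : A i} {t0 : ℝ} (ht0 : t0 ∈ Set.Icc (0:ℝ) 1)
    (hd : DistinctB (mixr t0 q r) i ai bi) :
    {t ∈ Set.Ioo (0:ℝ) 1 | ¬ DistinctB (mixr t q r) i ai bi}.Finite := by
  obtain ⟨hm1, hm2, hne⟩ := hd
  obtain ⟨x, hx⟩ := (condBelief_ne_iff hm1.ne' hm2.ne').mp hne
  set α := q (Function.update x.1 i ai, x.2) with hα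
  set β := r (Function.update x.1 i ai, x.2) with hβ
  set α' := q (Function.update x.1 i bi, x.2) with hα'
  set β' := r (Function.update x.1 i bi, x.2) with hβ'
  set γ := marg q i bi with hγ
  set δ := marg r i bi with hδ
  set γ' := marg q i ai with hγ'
  set δ' := marg r i ai with hδ'
  have key : ∀ t : ℝ,
      (mixr t q r) (Function.update x.1 i ai, x.2) * marg (mixr t q r) i bi
        - (mixr t q r) (Function.update x.1 i bi, x.2) * marg (mixr t q r) i ai
      = (α * γ - α' * γ')
        + ((α * (δ - γ) + γ * (β - α)) - (α' * (δ' - γ') + γ' * (β' - α'))) * t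
        + ((β - α) * (δ - γ) - (β' - α') * (δ' - γ')) * t ^ 2 := by
    intro t
    rw [marg_mixr, marg_mixr]
    simp only [mixr, ← hα, ← hβ, ← hα', ← hβ', ← hγ, ← hδ, ← hγ', ← hδ']
    ring
  have h0 : (α * γ - α' * γ')
        + ((α * (δ - γ) + γ * (β - α)) - (α' * (δ' - γ') + γ' * (β' - α'))) * t0
        + ((β - α) * (δ - γ) - (β' - α') * (δ' - γ')) * t0 ^ 2 ≠ 0 := by
    rw [← key t0]
    exact sub_ne_zero_of_ne hx
  refine (quad_finite h0).subset ?_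
  rintro t ⟨htI, hnd⟩
  have hm1' : 0 < marg (mixr t q r) i ai :=
    marg_mixr_pos hq hr htI (margpos_or hq hr hm1)
  have hm2' : 0 < marg (mixr t q r) i bi :=
    marg_mixr_pos hq hr htI (margpos_or hq hr hm2)
  have hbel : condBelief (mixr t q r) i ai = condBelief (mixr t q r) i bi := by
    by_contra hne'
    exact hnd ⟨hm1', hm2', hne'⟩
  have hx' : (mixr t q r) (Function.update x.1 i ai, x.2) * marg (mixr t q r) i bi
      = (mixr t q r) (Function.update x.1 i bi, x.2) * marg (mixr t q r) i ai := by
    have hc := congrFun hbel x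
    simp only [condBelief] at hc
    exact (div_eq_div_iff hm1'.ne' hm2'.ne').mp hc
  show _ = (0:ℝ)
  rw [← key t]
  exact sub_eq_zero_of_eq hx'

/-- The set of "good" features of `p`: recommendations with positive marginal,
and pairs of recommendations with positive marginals and distinct beliefs. -/
def GoodSetB (p : ((∀ j, A j) × Θ) → ℝ) :
    Set ((Σ i : I, A i) ⊕ (Σ i : I, A i × A i)) :=
  {k | Sum.elim (fun s : Σ i : I, A i => 0 < marg p s.1 s.2)
      (fun s : Σ i : I, A i × A i => DistinctB p s.1 s.2.1 s.2.2) k}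

lemma improve {P : Set (((∀ j, A j) × Θ) → ℝ)} (hPcv : Convex ℝ P)
    (hnn : ∀ p ∈ P, ∀ x, 0 ≤ p x) {p q : ((∀ j, A j) × Θ) → ℝ}
    (hp : p ∈ P) (hq : q ∈ P)
    {k : (Σ i : I, A i) ⊕ (Σ i : I, A i × A i)}
    (hkq : k ∈ GoodSetB q) (hkp : k ∉ GoodSetB p) :
    ∃ p' ∈ P, (GoodSetB p).ncard < (GoodSetB p').ncard := by
  classical
  have hpnn := hnn p hp
  have hqnn := hnn q hq
  set B1 : Set ℝ := ⋃ s : Σ i : I, A i × A i,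
    if DistinctB p s.1 s.2.1 s.2.2 then
      {t ∈ Set.Ioo (0:ℝ) 1 | ¬ DistinctB (mixr t p q) s.1 s.2.1 s.2.2} else ∅ with hB1def
  set B2 : Set ℝ := ⋃ s : Σ i : I, A i × A i,
    if DistinctB q s.1 s.2.1 s.2.2 then
      {t ∈ Set.Ioo (0:ℝ) 1 | ¬ DistinctB (mixr t p q) s.1 s.2.1 s.2.2} else ∅ with hB2def
  have hB1 : B1.Finite := Set.finite_iUnion fun s => by
    split_ifs with h
    · refine seg_finite hpnn hqnn (t0 := 0) ⟨le_refl 0, zero_le_one⟩ ?_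
      rwa [mixr_zero]
    · exact Set.finite_empty
  have hB2 : B2.Finite := Set.finite_iUnion fun s => by
    split_ifs with h
    · refine seg_finite hpnn hqnn (t0 := 1) ⟨zero_le_one, le_refl 1⟩ ?_
      rwa [mixr_one]
    · exact Set.finite_empty
  have hne : ((Set.Ioo (0:ℝ) 1) \ (B1 ∪ B2)).Nonempty :=
    ((Set.Ioo_infinite one_pos).diff (hB1.union hB2)).nonempty
  obtain ⟨t, htI, htB⟩ := hne
  have hp'P : mixr t p q ∈ P := mixr_mem hPcv hp hq (Set.mem_Icc_of_Ioo htI)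
  have hsub : GoodSetB p ∪ GoodSetB q ⊆ GoodSetB (mixr t p q) := by
    rintro k' (hk' | hk')
    · cases k' with
      | inl s => exact marg_mixr_pos hpnn hqnn htI (Or.inl hk')
      | inr s =>
        by_contra hnd
        apply htB
        left
        refine Set.mem_iUnion.mpr ⟨s, ?_⟩
        have hk'' : DistinctB p s.1 s.2.1 s.2.2 := hk'
        rw [if_pos hk'']
        exact ⟨htI, hnd⟩
    · cases k' with
      | inl s => exact marg_mixr_pos hpnn hqnn htI (Or.inr hk')
      | inr s =>
        by_contra hnd
        apply htB
        right
        refine Set.mem_iUnion.mpr ⟨s, ?_⟩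
        have hk'' : DistinctB q s.1 s.2.1 s.2.2 := hk'
        rw [if_pos hk'']
        exact ⟨htI, hnd⟩
  refine ⟨mixr t p q, hp'P, Set.ncard_lt_ncard ?_ (Set.toFinite _)⟩
  rw [Set.ssubset_iff_of_subset (Set.subset_union_left.trans hsub)]
  exact ⟨k, hsub (Or.inr hkq), hkp⟩

lemma exists_minmixed {P : Set (((∀ j, A j) × Θ) → ℝ)}
    (hPne : P.Nonempty) (hPcv : Convex ℝ P)
    (hnn : ∀ p ∈ P, ∀ x, 0 ≤ p x) : ∃ p ∈ P, MinMixed P p := by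
  classical
  have hbdd : BddAbove ((fun p => (GoodSetB p).ncard) '' P) := by
    refine ⟨(Set.univ : Set ((Σ i : I, A i) ⊕ (Σ i : I, A i × A i))).ncard, ?_⟩
    rintro n ⟨p, hp, rfl⟩
    exact Set.ncard_le_ncard (Set.subset_univ _) Set.finite_univ
  have hne' : ((fun p => (GoodSetB p).ncard) '' P).Nonempty := hPne.image _
  obtain ⟨p, hpP, hpscore⟩ := Nat.sSup_mem hne' hbdd
  have hmax : ∀ q ∈ P, (GoodSetB q).ncard ≤ (GoodSetB p).ncard := by
    intro q hq
    exact le_trans (le_csSup hbdd (Set.mem_image_of_mem _ hq)) (le_of_eq hpscore.symm)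
  refine ⟨p, hpP, ?_, ?_⟩
  · intro q hqP i ai hmq
    by_contra hmp
    have hkq : (Sum.inl ⟨i, ai⟩ : (Σ i : I, A i) ⊕ (Σ i : I, A i × A i)) ∈ GoodSetB q := hmq
    obtain ⟨p', hp'P, hlt⟩ := improve hPcv hnn hpP hqP hkq hmp
    exact absurd (hmax p' hp'P) (not_le.mpr hlt)
  · intro q hqP i ai bi h1 h2 hneq
    by_contra hmp
    have hkq : (Sum.inr ⟨i, ai, bi⟩ : (Σ i : I, A i) ⊕ (Σ i : I, A i × A i)) ∈ GoodSetB q :=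
      ⟨h1, h2, hneq⟩
    have hkp : (Sum.inr ⟨i, ai, bi⟩ : (Σ i : I, A i) ⊕ (Σ i : I, A i × A i)) ∉ GoodSetB p :=
      fun hd => hd.2.2 hmp
    obtain ⟨p', hp'P, hlt⟩ := improve hPcv hnn hpP hqP hkq hkp
    exact absurd (hmax p' hp'P) (not_le.mpr hlt)

lemma minmixed_iff {P : Set (((∀ j, A j) × Θ) → ℝ)} {pstar : ((∀ j, A j) × Θ) → ℝ}
    (hsP : pstar ∈ P) (hs : MinMixed P pstar) (p : ((∀ j, A j) × Θ) → ℝ) :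
    MinMixed P p ↔
      (∀ (i : I) (ai : A i), 0 < marg pstar i ai → 0 < marg p i ai) ∧
      (∀ (i : I) (ai bi : A i), DistinctB pstar i ai bi → DistinctB p i ai bi) := by
  constructor
  · intro hp
    refine ⟨fun i ai h => hp.1 pstar hsP i ai h, fun i ai bi hd => ?_⟩
    exact ⟨hp.1 pstar hsP i ai hd.1, hp.1 pstar hsP i bi hd.2.1,
      hp.2 pstar hsP i ai bi hd.1 hd.2.1 hd.2.2⟩
  · rintro ⟨h1, h2⟩
    refine ⟨fun q hq i ai hm => h1 i ai (hs.1 q hq i ai hm),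
      fun q hq i ai bi hma hmb hneq => ?_⟩
    exact (h2 i ai bi ⟨hs.1 q hq i ai hma, hs.1 q hq i bi hmb,
      hs.2 q hq i ai bi hma hmb hneq⟩).2.2

lemma continuous_marg (i : I) (ai : A i) :
    Continuous fun p : ((∀ j, A j) × Θ) → ℝ => marg p i ai := by
  unfold marg
  apply continuous_finset_sum
  intro x _
  by_cases h : x.1 i = ai
  · simpa [h] using continuous_apply x
  · simpa [h] using (continuous_const : Continuous fun _ : ((∀ j, A j) × Θ) → ℝ => (0:ℝ))

lemma isOpen_distinctB (i : I) (ai bi : A i) :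
    IsOpen {p : ((∀ j, A j) × Θ) → ℝ | DistinctB p i ai bi} := by
  have hset : {p : ((∀ j, A j) × Θ) → ℝ | DistinctB p i ai bi}
      = {p | 0 < marg p i ai} ∩ {p | 0 < marg p i bi} ∩
        ⋃ x : (∀ j, A j) × Θ,
          {p | p (Function.update x.1 i ai, x.2) * marg p i bi ≠
                p (Function.update x.1 i bi, x.2) * marg p i ai} := by
    ext p
    simp only [DistinctB, Set.mem_setOf_eq, Set.mem_inter_iff, Set.mem_iUnion]
    constructor
    · rintro ⟨ha, hb, hne⟩
      exact ⟨⟨ha, hb⟩, (condBelief_ne_iff ha.ne' hb.ne').mp hne⟩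
    · rintro ⟨⟨ha, hb⟩, hx⟩
      exact ⟨ha, hb, (condBelief_ne_iff ha.ne' hb.ne').mpr hx⟩
  rw [hset]
  refine IsOpen.inter (IsOpen.inter ?_ ?_) (isOpen_iUnion fun x => ?_)
  · exact isOpen_lt continuous_const (continuous_marg i ai)
  · exact isOpen_lt continuous_const (continuous_marg i bi)
  · exact isOpen_ne_fun ((continuous_apply _).mul (continuous_marg i bi))
      ((continuous_apply _).mul (continuous_marg i ai))

lemma continuous_mixr (q r : ((∀ j, A j) × Θ) → ℝ) :
    Continuous fun t : ℝ => mixr t q r := by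
  unfold mixr
  refine continuous_pi fun y => ?_
  exact ((continuous_const.sub continuous_id).mul continuous_const).add
    (continuous_id.mul continuous_const)

/-- for a non-empty closed convex set `P` of BCEs, the set of
`P`-minimally mixed BCEs is open and dense in `P` (subspace topology). -/
theorem stmt7 {I : Type} [Fintype I] [DecidableEq I]
    {A : I → Type} [∀ i, Fintype (A i)] [∀ i, DecidableEq (A i)]
    {Θ : Type} [Fintype Θ]
    (π : Θ → ℝ) (hπpos : ∀ θ, 0 < π θ) (hπ1 : ∑ θ, π θ = 1)
    (u : ∀ i : I, ((∀ j, A j) × Θ) → ℝ)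
    (P : Set (((∀ j, A j) × Θ) → ℝ))
    (hPne : P.Nonempty) (hPcl : IsClosed P) (hPcv : Convex ℝ P)
    (hPbce : ∀ p ∈ P, IsOutcome π p ∧ Obedient u p) :
    IsOpen {x : P | MinMixed P x.1} ∧ Dense {x : P | MinMixed P x.1} := by
  classical
  have hnn : ∀ p ∈ P, ∀ x, 0 ≤ p x := fun p hp => (hPbce p hp).1.1
  obtain ⟨pstar, hsP, hs⟩ := exists_minmixed hPne hPcv hnn
  constructor
  · -- openness
    set V : Set (((∀ j, A j) × Θ) → ℝ) :=
      (⋂ s : Σ i : I, A i,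
        if 0 < marg pstar s.1 s.2 then {p | 0 < marg p s.1 s.2} else Set.univ)
      ∩ (⋂ s : Σ i : I, A i × A i,
        if DistinctB pstar s.1 s.2.1 s.2.2 then
          {p | DistinctB p s.1 s.2.1 s.2.2} else Set.univ) with hVdef
    have hVopen : IsOpen V := by
      refine IsOpen.inter (isOpen_iInter_of_finite fun s => ?_)
        (isOpen_iInter_of_finite fun s => ?_)
      · split_ifs
        · exact isOpen_lt continuous_const (continuous_marg s.1 s.2)
        · exact isOpen_univ
      · split_ifs
        · exact isOpen_distinctB s.1 s.2.1 s.2.2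
        · exact isOpen_univ
    have hset : {x : P | MinMixed P x.1} = Subtype.val ⁻¹' V := by
      ext x
      simp only [Set.mem_setOf_eq, Set.mem_preimage, hVdef, Set.mem_inter_iff,
        Set.mem_iInter]
      rw [minmixed_iff hsP hs]
      constructor
      · rintro ⟨h1, h2⟩
        constructor
        · intro s
          split_ifs with h
          · exact h1 s.1 s.2 h
          · exact Set.mem_univ _
        · intro s
          split_ifs with h
          · exact h2 s.1 s.2.1 s.2.2 h
          · exact Set.mem_univ _
      · rintro ⟨h1, h2⟩
        constructor
        · intro i ai hm
          have := h1 ⟨i, ai⟩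
          rwa [if_pos hm] at this
        · intro i ai bi hd
          have := h2 ⟨i, ai, bi⟩
          rwa [if_pos hd] at this
    rw [hset]
    exact hVopen.preimage continuous_subtype_val
  · -- density
    rw [dense_iff_inter_open]
    rintro U hU ⟨x0, hx0U⟩
    obtain ⟨V, hVopen, hVeq⟩ := isOpen_induced_iff.mp hU
    have hx0V : (x0 : ((∀ j, A j) × Θ) → ℝ) ∈ V := by
      rw [← hVeq] at hx0U
      exact hx0U
    have hcont : Continuous fun t : ℝ => mixr t (x0 : ((∀ j, A j) × Θ) → ℝ) pstar :=
      continuous_mixr _ pstar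
    have h0 : (fun t : ℝ => mixr t (x0 : ((∀ j, A j) × Θ) → ℝ) pstar) 0 ∈ V := by
      show mixr (0:ℝ) (x0 : ((∀ j, A j) × Θ) → ℝ) pstar ∈ V
      rw [mixr_zero]
      exact hx0V
    have hnhds : (fun t : ℝ => mixr t (x0 : ((∀ j, A j) × Θ) → ℝ) pstar) ⁻¹' V
        ∈ nhds (0:ℝ) := hcont.continuousAt.preimage_mem_nhds (hVopen.mem_nhds h0)
    obtain ⟨ε, hε, hball⟩ := Metric.mem_nhds_iff.mp hnhds
    set B : Set ℝ := ⋃ s : Σ i : I, A i × A i,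
      if DistinctB pstar s.1 s.2.1 s.2.2 then
        {t ∈ Set.Ioo (0:ℝ) 1 |
          ¬ DistinctB (mixr t (x0 : ((∀ j, A j) × Θ) → ℝ) pstar) s.1 s.2.1 s.2.2}
      else ∅ with hBdef
    have hBfin : B.Finite := Set.finite_iUnion fun s => by
      split_ifs with h
      · refine seg_finite (hnn _ x0.2) (hnn pstar hsP) (t0 := 1) ⟨zero_le_one, le_refl 1⟩ ?_
        rwa [mixr_one]
      · exact Set.finite_empty
    have hne : (Set.Ioo (0:ℝ) (min ε 1) \ B).Nonempty :=
      ((Set.Ioo_infinite (lt_min hε one_pos)).diff hBfin).nonempty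
    obtain ⟨t, htI, htB⟩ := hne
    have htI1 : t ∈ Set.Ioo (0:ℝ) 1 :=
      ⟨htI.1, lt_of_lt_of_le htI.2 (min_le_right _ _)⟩
    have hmemP : mixr t (x0 : ((∀ j, A j) × Θ) → ℝ) pstar ∈ P :=
      mixr_mem hPcv x0.2 hsP (Set.mem_Icc_of_Ioo htI1)
    have hmm : MinMixed P (mixr t (x0 : ((∀ j, A j) × Θ) → ℝ) pstar) := by
      rw [minmixed_iff hsP hs]
      refine ⟨fun i ai hm =>
        marg_mixr_pos (hnn _ x0.2) (hnn pstar hsP) htI1 (Or.inr hm),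
        fun i ai bi hd => ?_⟩
      by_contra hnd
      apply htB
      refine Set.mem_iUnion.mpr ⟨⟨i, ai, bi⟩, ?_⟩
      rw [if_pos hd]
      exact ⟨htI1, hnd⟩
    have hmemV : mixr t (x0 : ((∀ j, A j) × Θ) → ℝ) pstar ∈ V := by
      apply hball
      simp only [Metric.mem_ball, Real.dist_eq, sub_zero, abs_of_pos htI.1]
      exact lt_of_lt_of_le htI.2 (min_le_left _ _)
    refine ⟨⟨mixr t (x0 : ((∀ j, A j) × Θ) → ℝ) pstar, hmemP⟩, ?_, hmm⟩
    rw [← hVeq]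
    exact hmemV
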